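/- arXiv:1111.6924 — 3 statements merged into one kernel-verified Lean document; each statement's English description precedes it below -/
import Mathlib

section
/- Let (Λ₀, Λ) be a relative category of paths and α ∈ Λ₀. For each vertex v of Λ₀ let X_v denote the set of ultrafilters in 𝒜(Λ₀,Λ)_v, equipped with the topology generated by the sets Ê = {𝒰 ∈ X_v : E ∈ 𝒰} for E ∈ 𝒜(Λ₀,Λ)_v. Then there is a well-defined map α̂ : X_{s(α)} → X_{r(α)} sending an ultrafilter 𝒰 to the ultrafilter generated by the ultrafilter base {αE : E ∈ 𝒰}; the map α̂ is injective and continuous; and an ultrafilter 𝒱 ∈ X_{r(α)} lies in the range of α̂ if and only if αΛ ∈ 𝒱. -/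
universe u v

/-- A category of paths: a small category (objects identified with identity
morphisms) with left and right cancellation and no inverses. -/
structure CategoryOfPaths (Λ : Type u) where
  s : Λ → Λ
  r : Λ → Λ
  comp : Λ → Λ → Λ
  s_comp : ∀ {α β : Λ}, s α = r β → s (comp α β) = s β
  r_comp : ∀ {α β : Λ}, s α = r β → r (comp α β) = r α
  comp_assoc : ∀ {α β γ : Λ}, s α = r β → s β = r γ →
    comp (comp α β) γ = comp α (comp β γ)
  id_comp : ∀ α : Λ, comp (r α) α = α
  comp_id : ∀ α : Λ, comp α (s α) = α
  s_r : ∀ α : Λ, s (r α) = r α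
  r_r : ∀ α : Λ, r (r α) = r α
  r_s : ∀ α : Λ, r (s α) = s α
  s_s : ∀ α : Λ, s (s α) = s α
  left_cancel : ∀ {α β γ : Λ}, s α = r β → s α = r γ → comp α β = comp α γ → β = γ
  right_cancel : ∀ {β γ α : Λ}, s β = r α → s γ = r α → comp β α = comp γ α → β = γ
  no_inverses : ∀ {α β : Λ}, s α = r β → comp α β = s β → α = s β ∧ β = s β

variable {Λ : Type u}

/-- The tail set `αΛ`. -/
def pTail (C : CategoryOfPaths Λ) (α : Λ) : Set Λ :=
  {x | ∃ β, C.s α = C.r β ∧ x = C.comp α β}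

/-- `vΛ`, the paths with range `v`. -/
def pRng (C : CategoryOfPaths Λ) (w : Λ) : Set Λ := {α | C.r α = w}

/-- `Λv`, the paths with source `v`. -/
def pSrc (C : CategoryOfPaths Λ) (w : Λ) : Set Λ := {α | C.s α = w}

/-- `[β]`, the initial segments of `β`. -/
def pSeg (C : CategoryOfPaths Λ) (β : Λ) : Set Λ := {α | β ∈ pTail C α}

/-- `α ⋔ β`. -/
def pMeets (C : CategoryOfPaths Λ) (α β : Λ) : Prop :=
  (pTail C α ∩ pTail C β).Nonempty

/-- `αE`. -/
def pMulSet (C : CategoryOfPaths Λ) (α : Λ) (E : Set Λ) : Set Λ :=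
  {x | ∃ β ∈ E, C.s α = C.r β ∧ x = C.comp α β}

/-- `σ^α(E ∩ αΛ)`, computed inside an ambient subcategory `S`. -/
def pShiftIn (C : CategoryOfPaths Λ) (S : Set Λ) (α : Λ) (E : Set Λ) : Set Λ :=
  {β | β ∈ S ∧ C.s α = C.r β ∧ C.comp α β ∈ E}

/-- `σ^α(E ∩ αΛ)`. -/
def pShift (C : CategoryOfPaths Λ) (α : Λ) (E : Set Λ) : Set Λ :=
  {β | C.s α = C.r β ∧ C.comp α β ∈ E}

/-- `⋁F`: the minimal common extensions of `F`. -/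
def pMinExt (C : CategoryOfPaths Λ) (F : Set Λ) : Set Λ :=
  {ε | (∀ α ∈ F, ε ∈ pTail C α) ∧
    ∀ γ, (∀ α ∈ F, γ ∈ pTail C α) → ε ∈ pTail C γ → γ = ε}

/-- `α ∨ β`: the minimal common extensions of `α` and `β`. -/
def pMinCE (C : CategoryOfPaths Λ) (α β : Λ) : Set Λ := pMinExt C {α, β}

/-- A subcategory of a category of paths, as a set of morphisms. -/
structure IsSubcategory (C : CategoryOfPaths Λ) (Λ₀ : Set Λ) : Prop where
  comp_mem : ∀ {α β : Λ}, α ∈ Λ₀ → β ∈ Λ₀ → C.s α = C.r β → C.comp α β ∈ Λ₀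
  s_mem : ∀ {α : Λ}, α ∈ Λ₀ → C.s α ∈ Λ₀
  r_mem : ∀ {α : Λ}, α ∈ Λ₀ → C.r α ∈ Λ₀

/-- A finitely aligned category of paths. -/
def FinitelyAligned (C : CategoryOfPaths Λ) : Prop :=
  ∀ α β : Λ, ∃ G : Set Λ, G.Finite ∧
    pTail C α ∩ pTail C β = ⋃ ε ∈ G, pTail C ε

/-- A finitely aligned relative category of paths `(Λ₀, Λ)`. -/
def RelFinitelyAligned (C : CategoryOfPaths Λ) (Λ₀ : Set Λ) : Prop :=
  (∀ α ∈ Λ₀, ∀ β ∈ Λ₀, ∃ G : Set Λ, G.Finite ∧ G ⊆ Λ₀ ∧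
      pTail C α ∩ pTail C β = ⋃ ε ∈ G, pTail C ε) ∧
  (∀ α ∈ Λ₀, pTail C α ∩ Λ₀ = pMulSet C α Λ₀)

/-- A ring of sets: contains `∅` and is closed under `∪`, `∩`, and `\`. -/
def IsSetRing {γ : Type v} (R : Set (Set γ)) : Prop :=
  ∅ ∈ R ∧ (∀ E ∈ R, ∀ F ∈ R, E ∪ F ∈ R) ∧ (∀ E ∈ R, ∀ F ∈ R, E ∩ F ∈ R) ∧
    (∀ E ∈ R, ∀ F ∈ R, E \ F ∈ R)

/-- A ring of sets on `S`: a ring of sets all of whose members are subsets of `S`. -/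
def IsSetRingOn {γ : Type v} (S : Set γ) (R : Set (Set γ)) : Prop :=
  IsSetRing R ∧ ∀ E ∈ R, E ⊆ S

/-- The ring of sets generated by a collection. -/
def setRingGen {γ : Type v} (G : Set (Set γ)) : Set (Set γ) :=
  ⋂₀ {R | IsSetRing R ∧ G ⊆ R}

/-- The ring of sets on `S` generated by a collection. -/
def setRingGenOn {γ : Type v} (S : Set γ) (G : Set (Set γ)) : Set (Set γ) :=
  ⋂₀ {R | IsSetRingOn S R ∧ G ⊆ R}

/-- A zigzag: a list of pairs `(αᵢ, βᵢ)` with `r αᵢ = r βᵢ` and `s αᵢ₊₁ = s βᵢ`. -/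
def IsZigzag (C : CategoryOfPaths Λ) (l : List (Λ × Λ)) : Prop :=
  (∀ p ∈ l, C.r p.1 = C.r p.2) ∧ l.Chain' (fun p q => C.s q.1 = C.s p.2)

/-- The (graph of the) zigzag map `φ_ζ = σ^{α₁} β₁ ⋯ σ^{αₙ} βₙ`, computed
inside an ambient subcategory `S`. -/
def zigzagRelIn (C : CategoryOfPaths Λ) (S : Set Λ) : List (Λ × Λ) → Λ → Λ → Prop
  | [], x, y => x = y ∧ x ∈ S
  | p :: rest, x, y => ∃ z, zigzagRelIn C S rest x z ∧ C.s p.2 = C.r z ∧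
      C.s p.1 = C.r y ∧ y ∈ S ∧ C.comp p.2 z = C.comp p.1 y

/-- `A(ζ)`: the domain of the zigzag map. -/
def zigzagDomIn (C : CategoryOfPaths Λ) (S : Set Λ) (l : List (Λ × Λ)) : Set Λ :=
  {x | ∃ y, zigzagRelIn C S l x y}

/-- `𝒟(Λ₀,Λ)⁰_v`: nonempty zigzag sets with entries in `Λ₀` and source `v`,
computed inside the ambient subcategory `S`. -/
def relD0 (C : CategoryOfPaths Λ) (Λ₀ S : Set Λ) (w : Λ) : Set (Set Λ) :=
  {E | E.Nonempty ∧ ∃ (l : List (Λ × Λ)) (h : l ≠ []),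
    IsZigzag C l ∧ (∀ p ∈ l, p.1 ∈ Λ₀ ∧ p.2 ∈ Λ₀) ∧
    C.s (l.getLast h).2 = w ∧ E = zigzagDomIn C S l}

/-- `𝒜(Λ₀,Λ)_v`: the ring of sets generated by the zigzag sets. -/
def relAring (C : CategoryOfPaths Λ) (Λ₀ S : Set Λ) (w : Λ) : Set (Set Λ) :=
  setRingGenOn {α | α ∈ S ∧ C.r α = w} (relD0 C Λ₀ S w)

/-- A filter in a ring of sets. -/
def IsFilterIn {γ : Type v} (R U : Set (Set γ)) : Prop :=
  U.Nonempty ∧ U ⊆ R ∧ (∀ E ∈ U, E.Nonempty) ∧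
    (∀ E ∈ U, ∀ F ∈ U, E ∩ F ∈ U) ∧ (∀ E ∈ U, ∀ F ∈ R, E ⊆ F → F ∈ U)

/-- An ultrafilter in a ring of sets: a maximal filter. -/
def IsUltrafilterIn {γ : Type v} (R U : Set (Set γ)) : Prop :=
  IsFilterIn R U ∧ ∀ V, IsFilterIn R V → U ⊆ V → V = U

/-- A filter base in a ring of sets. -/
def IsFilterBaseIn {γ : Type v} (R B : Set (Set γ)) : Prop :=
  B.Nonempty ∧ B ⊆ R ∧ (∀ E ∈ B, E.Nonempty) ∧
    ∀ E ∈ B, ∀ F ∈ B, ∃ G ∈ B, G ⊆ E ∩ F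

/-- The filter generated by a filter base. -/
def filterGenBy {γ : Type v} (R B : Set (Set γ)) : Set (Set γ) :=
  {E | E ∈ R ∧ ∃ F ∈ B, F ⊆ E}

/-- An ultrafilter base in a ring of sets. -/
def IsUltrafilterBaseIn {γ : Type v} (R B : Set (Set γ)) : Prop :=
  IsFilterBaseIn R B ∧ IsUltrafilterIn R (filterGenBy R B)

/-- A Boolean ring homomorphism defined on a ring of sets `A` with values in a
generalized Boolean algebra. -/
def IsBRHomOn {γ : Type v} {R : Type*} [GeneralizedBooleanAlgebra R]
    (A : Set (Set γ)) (ν : Set γ → R) : Prop :=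
  ν ∅ = ⊥ ∧ (∀ E ∈ A, ∀ F ∈ A, ν (E ∪ F) = ν E ⊔ ν F) ∧
    (∀ E ∈ A, ∀ F ∈ A, ν (E ∩ F) = ν E ⊓ ν F) ∧
    (∀ E ∈ A, ∀ F ∈ A, ν (E \ F) = ν E \ ν F)

/-- `𝒜_v`: the ring of sets on `vΛ` generated by the tail sets. -/
def tailRing (C : CategoryOfPaths Λ) (w : Λ) : Set (Set Λ) :=
  setRingGenOn (pRng C w) {E | ∃ α, C.r α = w ∧ E = pTail C α}

/-- A directed subset. -/
def pDirected (C : CategoryOfPaths Λ) (x : Set Λ) : Prop :=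
  ∀ α ∈ x, ∀ β ∈ x, (pTail C α ∩ pTail C β ∩ x).Nonempty

/-- A hereditary subset. -/
def pHereditary (C : CategoryOfPaths Λ) (x : Set Λ) : Prop :=
  ∀ γ ∈ x, ∀ α : Λ, γ ∈ pTail C α → α ∈ x

/-- `vΛ*`: the nonempty directed hereditary subsets of `vΛ`. -/
def lamStar (C : CategoryOfPaths Λ) (w : Λ) : Set (Set Λ) :=
  {x | x.Nonempty ∧ x ⊆ pRng C w ∧ pDirected C x ∧ pHereditary C x}

/-- `vΛ**`: the maximal directed subsets of `vΛ`. -/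
def lamStarStar (C : CategoryOfPaths Λ) (w : Λ) : Set (Set Λ) :=
  {x | x ⊆ pRng C w ∧ pDirected C x ∧
    ∀ y, y ⊆ pRng C w → pDirected C y → x ⊆ y → y = x}

/-- `αx = ⋃_{γ ∈ x} [αγ]` for `x ∈ s(α)Λ*`. -/
def pMulStar (C : CategoryOfPaths Λ) (α : Λ) (x : Set Λ) : Set Λ :=
  {δ | ∃ γ ∈ x, C.s α = C.r γ ∧ C.comp α γ ∈ pTail C δ}

/-- `𝒰_{C,0}`. -/
def UC0 (C : CategoryOfPaths Λ) (w : Λ) (x : Set Λ) : Set (Set Λ) :=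
  {E | E ∈ tailRing C w ∧ ∃ α ∈ x, pTail C α ⊆ E}

/-- `𝒰_C`. -/
def UC (C : CategoryOfPaths Λ) (w : Λ) (x : Set Λ) : Set (Set Λ) :=
  {E | E ∈ tailRing C w ∧ ∃ α ∈ x, x ∩ pTail C α ⊆ E}

/-- `X_v = vΛ*` as a type. -/
abbrev Xv (C : CategoryOfPaths Λ) (w : Λ) : Type u := {x : Set Λ // x ∈ lamStar C w}

/-- The topology on `X_v` generated by the sets `Ê`, `E ∈ 𝒜_v`. -/
def XvTop (C : CategoryOfPaths Λ) (w : Λ) : TopologicalSpace (Xv C w) :=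
  TopologicalSpace.generateFrom
    {t | ∃ E ∈ tailRing C w, t = {x : Xv C w | E ∈ UC C w x.1}}

/-- The vertices of `Λ`. -/
abbrev Vertex (C : CategoryOfPaths Λ) : Type u := {w : Λ // C.r w = w}

/-- `X`: the disjoint union of the spaces `X_v`. -/
abbrev Xtotal (C : CategoryOfPaths Λ) : Type u := Σ w : Vertex C, Xv C w.1

/-- The disjoint union topology on `X`. -/
def XtotalTop (C : CategoryOfPaths Λ) : TopologicalSpace (Xtotal C) :=
  letI : ∀ w : Vertex C, TopologicalSpace (Xv C w.1) := fun w => XvTop C w.1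
  inferInstance

/-- The boundary `∂Λ`: the closure of `Λ**` in `X`. -/
def boundarySet (C : CategoryOfPaths Λ) : Set (Xtotal C) :=
  @closure _ (XtotalTop C) {p : Xtotal C | p.2.1 ∈ lamStarStar C p.1.1}

/-- An exhaustive subset of `vΛ`. -/
def ExhaustiveAt (C : CategoryOfPaths Λ) (w : Λ) (F : Set Λ) : Prop :=
  ∀ α, C.r α = w → ∃ β ∈ F, pMeets C α β

/-- An aperiodic point of `Λ*`. -/
def pAperiodic (C : CategoryOfPaths Λ) (x : Set Λ) : Prop :=
  ∀ α ∈ x, ∀ β ∈ x, α ≠ β → pShift C α x ≠ pShift C β x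

/-- A right-aperiodic point of `wΛ*`. -/
def pRightAperiodicAt (C : CategoryOfPaths Λ) (w : Λ) (x : Set Λ) : Prop :=
  ∀ α β : Λ, C.s α = w → C.s β = w → α ≠ β → pMulStar C α x ≠ pMulStar C β x

/-- The triples `(α, β, x)` with `s α = s β` and `x ∈ s(α)Λ*`. -/
abbrev pTrip (C : CategoryOfPaths Λ) : Type u :=
  {t : Λ × Λ × Set Λ // C.s t.1 = C.s t.2.1 ∧ t.2.2 ∈ lamStar C (C.s t.1)}

/-- The groupoid equivalence relation on triples. -/
def tripRel (C : CategoryOfPaths Λ) (t t' : pTrip C) : Prop :=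
  ∃ (z : Set Λ) (δ δ' : Λ),
    z ∈ lamStar C (C.s δ) ∧ z ∈ lamStar C (C.s δ') ∧
    C.s t.1.1 = C.r δ ∧ C.s t'.1.1 = C.r δ' ∧
    t.1.2.2 = pMulStar C δ z ∧ t'.1.2.2 = pMulStar C δ' z ∧
    C.comp t.1.1 δ = C.comp t'.1.1 δ' ∧
    C.comp t.1.2.1 δ = C.comp t'.1.2.1 δ'

/-- The ultrafilter space of `𝒜(Λ₀,Λ)_v`. -/
abbrev relXv (C : CategoryOfPaths Λ) (Λ₀ : Set Λ) (w : Λ) : Type u :=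
  {U : Set (Set Λ) // IsUltrafilterIn (relAring C Λ₀ Set.univ w) U}

/-- The topology on the ultrafilter space of `𝒜(Λ₀,Λ)_v` generated by the `Ê`. -/
def relXvTop (C : CategoryOfPaths Λ) (Λ₀ : Set Λ) (w : Λ) :
    TopologicalSpace (relXv C Λ₀ w) :=
  TopologicalSpace.generateFrom
    {t | ∃ E ∈ relAring C Λ₀ Set.univ w, t = {U : relXv C Λ₀ w | E ∈ U.1}}

/-!
The map `α̂` is the pushforward of ultrafilters along concatenation with `α`: a set `F` belongs
to `α̂ 𝒰` exactly when its left shift `σ^α F = {β | αβ ∈ F}` belongs to `𝒰`. Both `E ↦ αE` and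
`F ↦ σ^α F` are Boolean ring homomorphisms, and appending the pairs `(α, r(α))` or `(r(α), α)` to a
zigzag turns its set `A(ζ)` into `αA(ζ)` or `σ^α A(ζ)`, so the two maps restrict to the rings
`𝒜(Λ₀,Λ)_{s(α)}` and `𝒜(Λ₀,Λ)_{r(α)}`. Since `σ^α(αE) = E` and `α(σ^α F) = F ∩ αΛ`, the maps
`𝒰 ↦ α̂ 𝒰` and `𝒱 ↦ σ^α 𝒱` are mutually inverse monotone bijections between the filters of
`𝒜(Λ₀,Λ)_{s(α)}` and the filters of `𝒜(Λ₀,Λ)_{r(α)}` containing `αΛ`; as the latter are closed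
upwards, maximality is preserved in both directions. Continuity holds because `α̂⁻¹(Ê)` is the
basic open set of `σ^α E`.
-/

section RingOfSets

variable {γ δ : Type v} {S : Set γ} {G : Set (Set γ)}

lemma subset_setRingGenOn : G ⊆ setRingGenOn S G := fun _ hE =>
  Set.mem_sInter.2 fun _ hR => hR.2 hE

lemma setRingGenOn_isSetRingOn (hG : ∀ E ∈ G, E ⊆ S) : IsSetRingOn S (setRingGenOn S G) := by
  have hpow : IsSetRingOn S {E | E ⊆ S} :=
    ⟨⟨Set.empty_subset S, fun _ hE _ hF => Set.union_subset hE hF,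
      fun _ hE _ _ => Set.inter_subset_left.trans hE, fun _ hE _ _ => Set.sdiff_subset.trans hE⟩,
      fun _ hE => hE⟩
  have mem : ∀ {E}, E ∈ setRingGenOn S G → ∀ R, IsSetRingOn S R → G ⊆ R → E ∈ R :=
    fun hE R hR hGR => Set.mem_sInter.1 hE R ⟨hR, hGR⟩
  refine ⟨⟨?_, ?_, ?_, ?_⟩, fun E hE => mem hE _ hpow hG⟩ <;>
    simp only [setRingGenOn, Set.mem_sInter]
  · exact fun R hR => hR.1.1.1
  · exact fun E hE F hF R hR => hR.1.1.2.1 E (mem hE R hR.1 hR.2) F (mem hF R hR.1 hR.2)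
  · exact fun E hE F hF R hR => hR.1.1.2.2.1 E (mem hE R hR.1 hR.2) F (mem hF R hR.1 hR.2)
  · exact fun E hE F hF R hR => hR.1.1.2.2.2 E (mem hE R hR.1 hR.2) F (mem hF R hR.1 hR.2)

lemma IsBRHomOn.mapsTo_setRingGenOn {φ : Set γ → Set δ} (hφ : IsBRHomOn Set.univ φ)
    {R : Set (Set δ)} (hR : IsSetRing R) (hGS : ∀ E ∈ G, E ⊆ S) (hGR : ∀ E ∈ G, φ E ∈ R) :
    Set.MapsTo φ (setRingGenOn S G) R := by
  obtain ⟨h0, hunion, hinter, hdiff⟩ := hφ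
  have hT : IsSetRingOn S {E | E ⊆ S ∧ φ E ∈ R} := by
    refine ⟨⟨⟨Set.empty_subset S, h0 ▸ hR.1⟩, ?_, ?_, ?_⟩, fun _ hE => hE.1⟩
    · exact fun E hE F hF => ⟨Set.union_subset hE.1 hF.1,
        (hunion E trivial F trivial).symm ▸ hR.2.1 _ hE.2 _ hF.2⟩
    · exact fun E hE F hF => ⟨Set.inter_subset_left.trans hE.1,
        (hinter E trivial F trivial).symm ▸ hR.2.2.1 _ hE.2 _ hF.2⟩
    · exact fun E hE F hF => ⟨Set.sdiff_subset.trans hE.1,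
        (hdiff E trivial F trivial).symm ▸ hR.2.2.2 _ hE.2 _ hF.2⟩
  have hGT : G ⊆ {E | E ⊆ S ∧ φ E ∈ R} := fun E hE => ⟨hGS E hE, hGR E hE⟩
  exact fun E hE => (Set.mem_sInter.1 hE _ ⟨hT, hGT⟩).2

end RingOfSets

section Shifts

variable {C : CategoryOfPaths Λ} (α : Λ)

lemma pMulSet_isBRHomOn : IsBRHomOn Set.univ (pMulSet C α) := by
  refine ⟨?_, fun E _ F _ => ?_, fun E _ F _ => ?_, fun E _ F _ => ?_⟩ <;> ext x
  · simp [pMulSet]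
  · simp only [pMulSet, Set.sup_eq_union, Set.mem_union, Set.mem_ofPred_eq]
    constructor
    · rintro ⟨β, hβ | hβ, h⟩
      exacts [Or.inl ⟨β, hβ, h⟩, Or.inr ⟨β, hβ, h⟩]
    · rintro (⟨β, hβ, h⟩ | ⟨β, hβ, h⟩)
      exacts [⟨β, Or.inl hβ, h⟩, ⟨β, Or.inr hβ, h⟩]
  · constructor
    · rintro ⟨β, ⟨hE, hF⟩, h, rfl⟩
      exact ⟨⟨β, hE, h, rfl⟩, ⟨β, hF, h, rfl⟩⟩
    · rintro ⟨⟨β, hE, h, rfl⟩, ⟨β', hF, h', heq⟩⟩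
      obtain rfl := C.left_cancel h h' heq
      exact ⟨β, ⟨hE, hF⟩, h, rfl⟩
  · constructor
    · rintro ⟨β, ⟨hE, hF⟩, h, rfl⟩
      refine ⟨⟨β, hE, h, rfl⟩, ?_⟩
      rintro ⟨β', hF', h', heq⟩
      exact hF (C.left_cancel h h' heq ▸ hF')
    · rintro ⟨⟨β, hE, h, rfl⟩, hx⟩
      exact ⟨β, ⟨hE, fun hF => hx ⟨β, hF, h, rfl⟩⟩, h, rfl⟩

lemma pShift_isBRHomOn : IsBRHomOn Set.univ (pShift C α) := by
  refine ⟨?_, fun E _ F _ => ?_, fun E _ F _ => ?_, fun E _ F _ => ?_⟩ <;> ext x <;>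
    simp only [pShift, Set.bot_eq_empty, Set.sup_eq_union, Set.inf_eq_inter, Set.mem_empty_iff_false,
      Set.mem_union, Set.mem_inter_iff, Set.mem_sdiff, Set.mem_ofPred_eq] <;> tauto

lemma pShift_mono {E F : Set Λ} (h : E ⊆ F) : pShift C α E ⊆ pShift C α F :=
  fun _ hx => ⟨hx.1, h hx.2⟩

lemma Set.Nonempty.of_pShift {F : Set Λ} (h : (pShift C α F).Nonempty) : F.Nonempty :=
  let ⟨β, _, hβ⟩ := h
  ⟨C.comp α β, hβ⟩

lemma pShift_pMulSet {E : Set Λ} (hE : E ⊆ pRng C (C.s α)) :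
    pShift C α (pMulSet C α E) = E := by
  ext x
  constructor
  · rintro ⟨h, β, hβ, h', heq⟩
    exact C.left_cancel h h' heq ▸ hβ
  · intro hx
    exact ⟨(hE hx).symm, x, hx, (hE hx).symm, rfl⟩

lemma pMulSet_pShift (F : Set Λ) : pMulSet C α (pShift C α F) = F ∩ pTail C α := by
  ext x
  constructor
  · rintro ⟨β, ⟨h, hF⟩, -, rfl⟩
    exact ⟨hF, β, h, rfl⟩
  · rintro ⟨hF, β, h, rfl⟩
    exact ⟨β, ⟨h, hF⟩, h, rfl⟩

end Shifts

section Zigzags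

variable {C : CategoryOfPaths Λ}

lemma zigzagRelIn_univ_r {l : List (Λ × Λ)} (hl : l ≠ []) {x y : Λ}
    (h : zigzagRelIn C Set.univ l x y) : C.r x = C.s (l.getLast hl).2 := by
  induction l generalizing y with
  | nil => exact absurd rfl hl
  | cons p rest ih =>
    obtain ⟨z, hz, hpz, -⟩ := h
    cases rest with
    | nil => exact hz.1 ▸ hpz.symm
    | cons q rest => simpa only [List.getLast_cons_cons] using ih (List.cons_ne_nil q rest) hz

/-- The last pair of a zigzag is the first to act. -/
lemma zigzagRelIn_univ_append_singleton (q : Λ × Λ) (l : List (Λ × Λ)) (x y : Λ) :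
    zigzagRelIn C Set.univ (l ++ [q]) x y ↔
      ∃ m, C.s q.2 = C.r x ∧ C.s q.1 = C.r m ∧ C.comp q.2 x = C.comp q.1 m ∧
        zigzagRelIn C Set.univ l m y := by
  induction l generalizing x y with
  | nil =>
    simp only [List.nil_append, zigzagRelIn, Set.mem_univ, and_true, true_and]
    constructor
    · rintro ⟨z, rfl, h⟩
      exact ⟨y, h.1, h.2.1, h.2.2, rfl⟩
    · rintro ⟨m, h1, h2, h3, rfl⟩
      exact ⟨x, rfl, h1, h2, h3⟩
  | cons p rest ih =>
    simp only [List.cons_append, zigzagRelIn, Set.mem_univ, true_and, ih]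
    constructor
    · rintro ⟨z, ⟨m, hm⟩, hz⟩
      exact ⟨m, hm.1, hm.2.1, hm.2.2.1, z, hm.2.2.2, hz⟩
    · rintro ⟨m, h1, h2, h3, z, hm, hz⟩
      exact ⟨z, ⟨m, h1, h2, h3, hm⟩, hz⟩

lemma zigzagDomIn_univ_nil : zigzagDomIn C Set.univ [] = Set.univ :=
  Set.eq_univ_of_forall fun x => ⟨x, rfl, trivial⟩

lemma zigzagDomIn_univ_append_mul (l : List (Λ × Λ)) (α : Λ) :
    zigzagDomIn C Set.univ (l ++ [(α, C.r α)]) = pMulSet C α (zigzagDomIn C Set.univ l) := by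
  ext x
  simp only [zigzagDomIn, Set.mem_ofPred_eq, zigzagRelIn_univ_append_singleton]
  constructor
  · rintro ⟨y, m, hx, hm, heq, hy⟩
    have hrx : C.r x = C.r α := by rw [← hx, C.s_r]
    exact ⟨m, ⟨y, hy⟩, hm, (hrx ▸ C.id_comp x).symm.trans heq⟩
  · rintro ⟨m, ⟨y, hy⟩, hm, rfl⟩
    refine ⟨y, m, ?_, hm, ?_, hy⟩
    · rw [C.s_r, C.r_comp hm]
    · simpa only [C.r_comp hm] using C.id_comp (C.comp α m)

lemma zigzagDomIn_univ_append_shift (l : List (Λ × Λ)) (α : Λ) :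
    zigzagDomIn C Set.univ (l ++ [(C.r α, α)]) = pShift C α (zigzagDomIn C Set.univ l) := by
  ext x
  simp only [zigzagDomIn, pShift, Set.mem_ofPred_eq, zigzagRelIn_univ_append_singleton]
  constructor
  · rintro ⟨y, m, hx, hm, heq, hy⟩
    have hrm : C.r m = C.r α := by rw [← hm, C.s_r]
    exact ⟨hx, y, heq.trans (hrm ▸ C.id_comp m) ▸ hy⟩
  · rintro ⟨hx, y, hy⟩
    refine ⟨y, C.comp α x, hx, ?_, ?_, hy⟩
    · rw [C.s_r, C.r_comp hx]
    · simpa only [C.r_comp hx] using (C.id_comp (C.comp α x)).symm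

lemma IsZigzag.append_singleton {l : List (Λ × Λ)} (hl : l ≠ []) (hζ : IsZigzag C l)
    {q : Λ × Λ} (hq : C.r q.1 = C.r q.2) (hs : C.s q.1 = C.s (l.getLast hl).2) :
    IsZigzag C (l ++ [q]) := by
  refine ⟨fun p hp => ?_, ?_⟩
  · rcases List.mem_append.1 hp with hp | hp
    · exact hζ.1 p hp
    · exact List.mem_singleton.1 hp ▸ hq
  · refine List.isChain_append.2 ⟨hζ.2, List.isChain_singleton _, ?_⟩
    intro a ha b hb
    rw [List.getLast?_eq_some_getLast hl, Option.mem_def, Option.some.injEq] at ha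
    simp only [List.head?_cons, Option.mem_def, Option.some.injEq] at hb
    exact ha ▸ hb ▸ hs

end Zigzags

section ZigzagRing

variable {C : CategoryOfPaths Λ} {Λ₀ : Set Λ}

lemma subset_pRng_of_mem_relD0 {w : Λ} {E : Set Λ} (hE : E ∈ relD0 C Λ₀ Set.univ w) :
    E ⊆ pRng C w := by
  obtain ⟨-, l, hl, -, -, rfl, rfl⟩ := hE
  exact fun _ ⟨_, h⟩ => zigzagRelIn_univ_r hl h

lemma relAring_isSetRingOn (w : Λ) : IsSetRingOn {a | a ∈ Set.univ ∧ C.r a = w}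
    (relAring C Λ₀ Set.univ w) :=
  setRingGenOn_isSetRingOn fun _ hE _ hx => ⟨trivial, subset_pRng_of_mem_relD0 hE hx⟩

lemma subset_pRng_of_mem_relAring {w : Λ} {E : Set Λ} (hE : E ∈ relAring C Λ₀ Set.univ w) :
    E ⊆ pRng C w :=
  fun _ hx => ((relAring_isSetRingOn w).2 E hE hx).2

variable (hsub : IsSubcategory C Λ₀) {α : Λ} (hα : α ∈ Λ₀)
include hsub hα

lemma IsZigzag.append_mem {l : List (Λ × Λ)} (hl : l ≠ []) (hζ : IsZigzag C l)
    (hΛ₀ : ∀ p ∈ l, p.1 ∈ Λ₀ ∧ p.2 ∈ Λ₀) {q : Λ × Λ} (hq : q = (α, C.r α) ∨ q = (C.r α, α))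
    (hs : C.s q.1 = C.s (l.getLast hl).2) :
    IsZigzag C (l ++ [q]) ∧ ∀ p ∈ l ++ [q], p.1 ∈ Λ₀ ∧ p.2 ∈ Λ₀ := by
  have hqΛ₀ : q.1 ∈ Λ₀ ∧ q.2 ∈ Λ₀ := by
    rcases hq with rfl | rfl
    exacts [⟨hα, hsub.r_mem hα⟩, ⟨hsub.r_mem hα, hα⟩]
  refine ⟨hζ.append_singleton hl ?_ hs, fun p hp => ?_⟩
  · rcases hq with rfl | rfl <;> simp only [C.r_r]
  · rcases List.mem_append.1 hp with hp | hp
    exacts [hΛ₀ p hp, List.mem_singleton.1 hp ▸ hqΛ₀]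

lemma pMulSet_mem_relD0 {E : Set Λ} (hE : E ∈ relD0 C Λ₀ Set.univ (C.s α)) :
    pMulSet C α E ∈ relD0 C Λ₀ Set.univ (C.r α) := by
  obtain ⟨⟨e, he⟩, l, hl, hζ, hΛ₀, hlast, rfl⟩ := hE
  have hre : C.s α = C.r e := by
    obtain ⟨_, h⟩ := he
    rw [zigzagRelIn_univ_r hl h, hlast]
  obtain ⟨hζ', hΛ₀'⟩ := hζ.append_mem hsub hα hl hΛ₀ (Or.inl rfl) hlast.symm
  refine ⟨⟨_, e, he, hre, rfl⟩, _, List.concat_ne_nil _ l, hζ', hΛ₀', ?_,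
    (zigzagDomIn_univ_append_mul l α).symm⟩
  rw [List.getLast_concat]
  exact C.s_r α

lemma pShift_mem_relAring_of_mem_relD0 {F : Set Λ} (hF : F ∈ relD0 C Λ₀ Set.univ (C.r α)) :
    pShift C α F ∈ relAring C Λ₀ Set.univ (C.s α) := by
  obtain ⟨-, l, hl, hζ, hΛ₀, hlast, rfl⟩ := hF
  rcases (pShift C α (zigzagDomIn C Set.univ l)).eq_empty_or_nonempty with h | hne
  · exact h ▸ (relAring_isSetRingOn _).1.1
  obtain ⟨hζ', hΛ₀'⟩ := hζ.append_mem hsub hα hl hΛ₀ (Or.inr rfl) (by rw [C.s_r, hlast])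
  refine subset_setRingGenOn ⟨hne, _, List.concat_ne_nil _ l, hζ', hΛ₀', ?_,
    (zigzagDomIn_univ_append_shift l α).symm⟩
  rw [List.getLast_concat]

lemma pTail_mem_relAring : pTail C α ∈ relAring C Λ₀ Set.univ (C.r α) := by
  have hdom : zigzagDomIn C Set.univ [(α, C.r α)] = pTail C α := by
    rw [← List.nil_append [(α, C.r α)], zigzagDomIn_univ_append_mul, zigzagDomIn_univ_nil]
    ext x
    exact ⟨fun ⟨β, _, h⟩ => ⟨β, h⟩, fun ⟨β, h⟩ => ⟨β, trivial, h⟩⟩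
  refine subset_setRingGenOn ⟨⟨α, C.s α, (C.r_s α).symm, (C.comp_id α).symm⟩, [(α, C.r α)],
    List.cons_ne_nil _ _, ⟨?_, List.isChain_singleton _⟩, ?_, C.s_r α, hdom.symm⟩
  · simp only [List.mem_singleton, forall_eq, C.r_r]
  · simp only [List.mem_singleton, forall_eq]
    exact ⟨hα, hsub.r_mem hα⟩

lemma pMulSet_mem_relAring {E : Set Λ} (hE : E ∈ relAring C Λ₀ Set.univ (C.s α)) :
    pMulSet C α E ∈ relAring C Λ₀ Set.univ (C.r α) := by
  refine (pMulSet_isBRHomOn α).mapsTo_setRingGenOn (relAring_isSetRingOn _).1 ?_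
    (fun _ hE => subset_setRingGenOn (pMulSet_mem_relD0 hsub hα hE)) hE
  exact fun _ hE _ hx => ⟨trivial, subset_pRng_of_mem_relD0 hE hx⟩

lemma pShift_mem_relAring {F : Set Λ} (hF : F ∈ relAring C Λ₀ Set.univ (C.r α)) :
    pShift C α F ∈ relAring C Λ₀ Set.univ (C.s α) := by
  refine (pShift_isBRHomOn α).mapsTo_setRingGenOn (relAring_isSetRingOn _).1 ?_
    (fun _ hF => pShift_mem_relAring_of_mem_relD0 hsub hα hF) hF
  exact fun _ hF _ hx => ⟨trivial, subset_pRng_of_mem_relD0 hF hx⟩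

end ZigzagRing

/-- `α̂ 𝒰`, realised as the pushforward of `𝒰` along `β ↦ αβ`. -/
def pMulFilter (C : CategoryOfPaths Λ) (Λ₀ : Set Λ) (α : Λ) (U : Set (Set Λ)) : Set (Set Λ) :=
  {F | F ∈ relAring C Λ₀ Set.univ (C.r α) ∧ pShift C α F ∈ U}

section Ultrafilters

variable {C : CategoryOfPaths Λ} {Λ₀ : Set Λ} {α : Λ}

local notation "𝒜" => relAring C Λ₀ Set.univ

lemma pMulFilter_image_pShift {V : Set (Set Λ)} (hV : IsFilterIn (𝒜 (C.r α)) V)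
    (hαV : pTail C α ∈ V) : pMulFilter C Λ₀ α (pShift C α '' V) = V := by
  refine Set.Subset.antisymm ?_ fun F hF => ⟨hV.2.1 hF, F, hF, rfl⟩
  rintro F ⟨hF, F', hF', hσ⟩
  have h_inter : F' ∩ pTail C α = F ∩ pTail C α := by
    rw [← pMulSet_pShift, ← pMulSet_pShift, hσ]
  exact hV.2.2.2.2 _ (h_inter ▸ hV.2.2.2.1 F' hF' _ hαV) F hF Set.inter_subset_left

variable (hsub : IsSubcategory C Λ₀) (hα : α ∈ Λ₀)
include hsub hα

lemma pMulSet_mem_of_mem_filter {U : Set (Set Λ)} (hU : IsFilterIn (𝒜 (C.s α)) U)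
    {E : Set Λ} (hE : E ∈ U) : pMulSet C α E ∈ pMulFilter C Λ₀ α U := by
  have hE𝒜 := hU.2.1 hE
  exact ⟨pMulSet_mem_relAring hsub hα hE𝒜,
    (pShift_pMulSet α (subset_pRng_of_mem_relAring hE𝒜)).symm ▸ hE⟩

lemma filterGenBy_image_pMulSet {U : Set (Set Λ)} (hU : IsFilterIn (𝒜 (C.s α)) U) :
    filterGenBy (𝒜 (C.r α)) (pMulSet C α '' U) = pMulFilter C Λ₀ α U := by
  ext F
  constructor
  · rintro ⟨hF, _, ⟨E, hE, rfl⟩, hEF⟩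
    have hE_sub : E ⊆ pShift C α F :=
      pShift_pMulSet α (subset_pRng_of_mem_relAring (hU.2.1 hE)) ▸ pShift_mono α hEF
    exact ⟨hF, hU.2.2.2.2 E hE _ (pShift_mem_relAring hsub hα hF) hE_sub⟩
  · rintro ⟨hF, hσF⟩
    exact ⟨hF, _, ⟨_, hσF, rfl⟩, pMulSet_pShift α F ▸ Set.inter_subset_left⟩

lemma pTail_mem_pMulFilter {U : Set (Set Λ)} (hU : IsFilterIn (𝒜 (C.s α)) U) :
    pTail C α ∈ pMulFilter C Λ₀ α U := by
  obtain ⟨E, hE⟩ := hU.1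
  have hE_sub : E ⊆ pShift C α (pTail C α) := fun β hβ =>
    have h := (subset_pRng_of_mem_relAring (hU.2.1 hE) hβ).symm
    ⟨h, β, h, rfl⟩
  exact ⟨pTail_mem_relAring hsub hα,
    hU.2.2.2.2 E hE _ (pShift_mem_relAring hsub hα (pTail_mem_relAring hsub hα)) hE_sub⟩

lemma isFilterIn_pMulFilter {U : Set (Set Λ)} (hU : IsFilterIn (𝒜 (C.s α)) U) :
    IsFilterIn (𝒜 (C.r α)) (pMulFilter C Λ₀ α U) := by
  refine ⟨⟨_, pTail_mem_pMulFilter hsub hα hU⟩, fun _ hF => hF.1,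
    fun _ hF => (hU.2.2.1 _ hF.2).of_pShift α, fun E hE F hF => ?_, fun E hE F hF hEF => ?_⟩
  · refine ⟨(relAring_isSetRingOn _).1.2.2.1 E hE.1 F hF.1, ?_⟩
    exact (pShift_isBRHomOn α).2.2.1 E trivial F trivial ▸ hU.2.2.2.1 _ hE.2 _ hF.2
  · exact ⟨hF, hU.2.2.2.2 _ hE.2 _ (pShift_mem_relAring hsub hα hF) (pShift_mono α hEF)⟩

lemma image_pShift_pMulFilter {U : Set (Set Λ)} (hU : IsFilterIn (𝒜 (C.s α)) U) :
    pShift C α '' pMulFilter C Λ₀ α U = U := by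
  refine Set.Subset.antisymm (fun _ ⟨_, hF, hσF⟩ => hσF ▸ hF.2) fun E hE => ?_
  exact ⟨_, pMulSet_mem_of_mem_filter hsub hα hU hE,
    pShift_pMulSet α (subset_pRng_of_mem_relAring (hU.2.1 hE))⟩

lemma isFilterIn_image_pShift {V : Set (Set Λ)} (hV : IsFilterIn (𝒜 (C.r α)) V)
    (hαV : pTail C α ∈ V) : IsFilterIn (𝒜 (C.s α)) (pShift C α '' V) := by
  have h_inter : ∀ F ∈ V, F ∩ pTail C α ∈ V := fun F hF => hV.2.2.2.1 F hF _ hαV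
  refine ⟨hV.1.image _, ?_, ?_, ?_, ?_⟩
  · rintro _ ⟨F, hF, rfl⟩
    exact pShift_mem_relAring hsub hα (hV.2.1 hF)
  · rintro _ ⟨F, hF, rfl⟩
    obtain ⟨_, hxF, β, hβ, rfl⟩ := hV.2.2.1 _ (h_inter F hF)
    exact ⟨β, hβ, hxF⟩
  · rintro _ ⟨F, hF, rfl⟩ _ ⟨F', hF', rfl⟩
    exact ⟨F ∩ F', hV.2.2.2.1 F hF F' hF', (pShift_isBRHomOn α).2.2.1 F trivial F' trivial⟩
  · rintro _ ⟨F, hF, rfl⟩ E hE hσFE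
    have hαE : pMulSet C α E ∈ V := by
      refine hV.2.2.2.2 _ (h_inter F hF) _ (pMulSet_mem_relAring hsub hα hE) ?_
      rw [← pMulSet_pShift]
      rintro _ ⟨β, hβ, h, rfl⟩
      exact ⟨β, hσFE hβ, h, rfl⟩
    exact ⟨_, hαE, pShift_pMulSet α (subset_pRng_of_mem_relAring hE)⟩

lemma isUltrafilterIn_pMulFilter {U : Set (Set Λ)} (hU : IsUltrafilterIn (𝒜 (C.s α)) U) :
    IsUltrafilterIn (𝒜 (C.r α)) (pMulFilter C Λ₀ α U) := by
  refine ⟨isFilterIn_pMulFilter hsub hα hU.1, fun W hW hUW => ?_⟩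
  have hαW : pTail C α ∈ W := hUW (pTail_mem_pMulFilter hsub hα hU.1)
  have hσW : pShift C α '' W = U := by
    refine hU.2 _ (isFilterIn_image_pShift hsub hα hW hαW) ?_
    rw [← image_pShift_pMulFilter hsub hα hU.1]
    exact Set.image_mono hUW
  rw [← hσW, pMulFilter_image_pShift hW hαW]

lemma isUltrafilterIn_image_pShift {V : Set (Set Λ)} (hV : IsUltrafilterIn (𝒜 (C.r α)) V)
    (hαV : pTail C α ∈ V) : IsUltrafilterIn (𝒜 (C.s α)) (pShift C α '' V) := by
  refine ⟨isFilterIn_image_pShift hsub hα hV.1 hαV, fun U hU hVU => ?_⟩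
  have hσU : pMulFilter C Λ₀ α U = V := by
    refine hV.2 _ (isFilterIn_pMulFilter hsub hα hU) ?_
    rw [← pMulFilter_image_pShift hV.1 hαV]
    exact fun F hF => ⟨hF.1, hVU hF.2⟩
  rw [← hσU, image_pShift_pMulFilter hsub hα hU]

end Ultrafilters

/-- Theorem 4.2. For `α ∈ Λ₀`, concatenation by `α` induces a
well-defined injective continuous map `α̂ : X_{s(α)} → X_{r(α)}` between the
ultrafilter spaces, whose range consists of the ultrafilters containing `αΛ`. -/
theorem statement6 {Λ : Type u} (C : CategoryOfPaths Λ) (Λ₀ : Set Λ)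
    (hsub : IsSubcategory C Λ₀) (α : Λ) (hα : α ∈ Λ₀) :
    ∃ f : relXv C Λ₀ (C.s α) → relXv C Λ₀ (C.r α),
      (∀ U : relXv C Λ₀ (C.s α),
        (f U).1 = filterGenBy (relAring C Λ₀ Set.univ (C.r α)) ((pMulSet C α) '' U.1)) ∧
      Function.Injective f ∧
      @Continuous _ _ (relXvTop C Λ₀ (C.s α)) (relXvTop C Λ₀ (C.r α)) f ∧
      (∀ V : relXv C Λ₀ (C.r α), V ∈ Set.range f ↔ pTail C α ∈ V.1) := by
  let f (U : relXv C Λ₀ (C.s α)) : relXv C Λ₀ (C.r α) :=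
    ⟨pMulFilter C Λ₀ α U.1, isUltrafilterIn_pMulFilter hsub hα U.2⟩
  refine ⟨f, fun U => (filterGenBy_image_pMulSet hsub hα U.2.1).symm, fun U U' h => ?_, ?_,
    fun V => ⟨?_, fun hαV => ?_⟩⟩
  · rw [Subtype.ext_iff, ← image_pShift_pMulFilter hsub hα U.2.1,
      ← image_pShift_pMulFilter hsub hα U'.2.1]
    exact congrArg (pShift C α '' ·.1) h
  · refine continuous_generateFrom_iff.2 ?_
    rintro _ ⟨E, hE, rfl⟩
    exact .basic _ ⟨pShift C α E, pShift_mem_relAring hsub hα hE,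
      Set.ext fun _ => ⟨And.right, And.intro hE⟩⟩
  · rintro ⟨U, rfl⟩
    exact pTail_mem_pMulFilter hsub hα U.2.1
  · exact ⟨⟨_, isUltrafilterIn_image_pShift hsub hα V.2 hαV⟩,
      Subtype.ext (pMulFilter_image_pShift V.2.1 hαV)⟩
end

section
/- Let Λ be a finitely aligned category of paths. Let α, α' ∈ Λ, x ∈ s(α)Λ*, and x' ∈ s(α')Λ* with αx = α'x'. Then there exist δ ∈ s(α)Λ, δ' ∈ s(α')Λ, and z ∈ s(δ)Λ* such that x = δz, x' = δ'z, and αδ = α'δ'; moreover δ and δ' may be chosen so that αδ ∈ α ∨ α'. -/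
universe u v

variable {Λ : Type u}

/-! Since `α' ∈ α'x' = αx`, some `αγ` with `γ ∈ x` extends `α'`. Finite alignment
puts a minimal common extension `μ = αδ = α'δ'` of `α` and `α'` below `αγ`, and
heredity gives `δ ∈ x` and `δ' ∈ x'`. The common tail is `z = σ^δ(x)`: it recovers
`x = δz`, and it is also `σ^{δ'}(x')` because `σ^{αδ}(αx) = σ^δ(x)` for hereditary `x`. -/

namespace CategoryOfPaths

variable (C : CategoryOfPaths Λ)

lemma mem_pTail_self (a : Λ) : a ∈ pTail C a :=
  ⟨C.s a, (C.r_s a).symm, (C.comp_id a).symm⟩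

lemma pTail_subset_of_mem {a b : Λ} (hab : b ∈ pTail C a) : pTail C b ⊆ pTail C a := by
  rintro _ ⟨γ, hγ, rfl⟩
  obtain ⟨β, hβ, rfl⟩ := hab
  have hsβ : C.s β = C.r γ := (C.s_comp hβ).symm.trans hγ
  refine ⟨C.comp β γ, ?_, C.comp_assoc hβ hsβ⟩
  rw [C.r_comp hsβ]
  exact hβ

lemma eq_of_mem_pTail_of_mem_pTail {a b : Λ} (hab : b ∈ pTail C a) (hba : a ∈ pTail C b) :
    a = b := by
  obtain ⟨β, hβ, rfl⟩ := hab
  obtain ⟨γ, hγ, hloop⟩ := hba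
  have hsβ : C.s β = C.r γ := (C.s_comp hβ).symm.trans hγ
  have hβγ : C.comp β γ = C.s a := by
    refine C.left_cancel (by rw [C.r_comp hsβ]; exact hβ) (C.r_s a).symm ?_
    rw [C.comp_id, ← C.comp_assoc hβ hsβ, ← hloop]
  have hsa : C.s a = C.s γ := by rw [← C.s_comp hsβ, hβγ, C.s_s]
  obtain ⟨hβs, -⟩ := C.no_inverses hsβ (hβγ.trans hsa)
  rw [hβs, ← hsa, C.comp_id]

lemma pTail_injective : Function.Injective (pTail C) := fun a b hab =>
  C.eq_of_mem_pTail_of_mem_pTail (hab ▸ C.mem_pTail_self b) (hab ▸ C.mem_pTail_self a)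

lemma mem_pTail_of_comp_mem_pTail_comp {a β γ : Λ} (hβ : C.s a = C.r β)
    (hγ : C.s a = C.r γ) (hmem : C.comp a γ ∈ pTail C (C.comp a β)) : γ ∈ pTail C β := by
  obtain ⟨η, hη, heq⟩ := hmem
  have hsβ : C.s β = C.r η := (C.s_comp hβ).symm.trans hη
  refine ⟨η, hsβ, C.left_cancel hγ (by rw [C.r_comp hsβ]; exact hβ) ?_⟩
  rw [heq, C.comp_assoc hβ hsβ]

lemma mem_pMinCE_iff {a b μ : Λ} :
    μ ∈ pMinCE C a b ↔ μ ∈ pTail C a ∩ pTail C b ∧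
      ∀ γ ∈ pTail C a ∩ pTail C b, μ ∈ pTail C γ → γ = μ := by
  simp only [pMinCE, pMinExt, Set.forall_mem_insert, Set.mem_singleton_iff, forall_eq,
    Set.mem_ofPred_eq, Set.mem_inter_iff, and_imp]

lemma exists_mem_pMinCE_of_mem_pTail (hfa : FinitelyAligned C) {a b ε : Λ}
    (ha : ε ∈ pTail C a) (hb : ε ∈ pTail C b) : ∃ μ ∈ pMinCE C a b, ε ∈ pTail C μ := by
  obtain ⟨G, hGfin, hG⟩ := hfa a b
  have hcover : ∀ {γ}, γ ∈ pTail C a ∩ pTail C b ↔ ∃ g ∈ G, γ ∈ pTail C g := by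
    intro γ; rw [hG]; simp only [Set.mem_iUnion, exists_prop]
  -- a generator below `ε` whose tail set is maximal is a minimal common extension
  obtain ⟨μ, ⟨hμG, hεμ⟩, hμmax⟩ :=
    (hGfin.subset (Set.sep_subset G (ε ∈ pTail C ·))).exists_maximalFor (pTail C) _
      (hcover.1 ⟨ha, hb⟩)
  refine ⟨μ, (C.mem_pMinCE_iff).2 ⟨hcover.2 ⟨μ, hμG, C.mem_pTail_self μ⟩, ?_⟩, hεμ⟩
  intro γ hγ hμγ
  obtain ⟨g, hgG, hγg⟩ := hcover.1 hγ
  have hμg : pTail C μ ⊆ pTail C g :=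
    (C.pTail_subset_of_mem hμγ).trans (C.pTail_subset_of_mem hγg)
  have hgμ := hμmax ⟨hgG, C.pTail_subset_of_mem hγg (C.pTail_subset_of_mem hμγ hεμ)⟩ hμg
  exact C.pTail_injective (((C.pTail_subset_of_mem hγg).trans hgμ).antisymm
    (C.pTail_subset_of_mem hμγ))

lemma comp_mem_pMulStar {x : Set Λ} {a β : Λ} (hβ : C.s a = C.r β) (hβx : β ∈ x) :
    C.comp a β ∈ pMulStar C a x :=
  ⟨β, hβx, hβ, C.mem_pTail_self _⟩

lemma self_mem_pMulStar {x : Set Λ} {a : Λ} (hx : x ∈ lamStar C (C.s a)) :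
    a ∈ pMulStar C a x := by
  obtain ⟨⟨β, hβx⟩, hxr, -, -⟩ := hx
  exact ⟨β, hβx, (hxr hβx).symm, ⟨β, (hxr hβx).symm, rfl⟩⟩

lemma mem_of_comp_mem_pMulStar {x : Set Λ} (hx : pHereditary C x) {a β : Λ}
    (hβ : C.s a = C.r β) (hmem : C.comp a β ∈ pMulStar C a x) : β ∈ x := by
  obtain ⟨γ, hγx, hγ, hγβ⟩ := hmem
  exact hx γ hγx β (C.mem_pTail_of_comp_mem_pTail_comp hβ hγ hγβ)

lemma pShift_mem_lamStar {x : Set Λ} (hdir : pDirected C x) (hher : pHereditary C x)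
    {δ : Λ} (hδ : δ ∈ x) : pShift C δ x ∈ lamStar C (C.s δ) := by
  refine ⟨⟨C.s δ, (C.r_s δ).symm, by rw [C.comp_id]; exact hδ⟩, fun γ hγ => hγ.1.symm, ?_, ?_⟩
  · rintro γ₁ ⟨hγ₁, hδγ₁⟩ γ₂ ⟨hγ₂, hδγ₂⟩
    obtain ⟨_, ⟨⟨β, hβ, rfl⟩, hζ₂⟩, hζx⟩ := hdir _ hδγ₁ _ hδγ₂
    have hsγ₁ : C.s γ₁ = C.r β := (C.s_comp hγ₁).symm.trans hβ
    have hassoc : C.comp δ (C.comp γ₁ β) = C.comp (C.comp δ γ₁) β :=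
      (C.comp_assoc hγ₁ hsγ₁).symm
    have hr : C.s δ = C.r (C.comp γ₁ β) := by rw [C.r_comp hsγ₁]; exact hγ₁
    refine ⟨C.comp γ₁ β, ⟨⟨β, hsγ₁, rfl⟩, ?_⟩, hr, hassoc ▸ hζx⟩
    exact C.mem_pTail_of_comp_mem_pTail_comp hγ₂ hr (hassoc ▸ hζ₂)
  · rintro γ ⟨hγ, hδγ⟩ a ⟨β, hβ, rfl⟩
    have ha : C.s δ = C.r a := by rw [← C.r_comp hβ]; exact hγ
    exact ⟨ha, hher _ hδγ _ ⟨β, by rw [C.s_comp ha]; exact hβ, (C.comp_assoc ha hβ).symm⟩⟩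

lemma eq_pMulStar_pShift {x : Set Λ} (hdir : pDirected C x) (hher : pHereditary C x)
    {δ : Λ} (hδ : δ ∈ x) : x = pMulStar C δ (pShift C δ x) := by
  ext η
  constructor
  · intro hη
    obtain ⟨_, ⟨hζη, β, hβ, rfl⟩, hζx⟩ := hdir η hη δ hδ
    exact ⟨β, ⟨hβ, hζx⟩, hβ, hζη⟩
  · rintro ⟨γ, ⟨-, hγx⟩, -, hγη⟩
    exact hher _ hγx η hγη

lemma pShift_comp_pMulStar {x : Set Λ} (hx : pHereditary C x) {a δ : Λ}
    (hδ : C.s a = C.r δ) : pShift C (C.comp a δ) (pMulStar C a x) = pShift C δ x := by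
  ext γ
  simp only [pShift, Set.mem_ofPred_eq, C.s_comp hδ]
  refine and_congr_right fun hγ => ?_
  have hr : C.s a = C.r (C.comp δ γ) := by rw [C.r_comp hγ]; exact hδ
  rw [C.comp_assoc hδ hγ]
  exact ⟨C.mem_of_comp_mem_pMulStar hx hr, C.comp_mem_pMulStar hr⟩

end CategoryOfPaths

/-- Lemma 6.1, common tails. If `αx = α'x'` for
`x ∈ s(α)Λ*`, `x' ∈ s(α')Λ*`, then there are `δ, δ'` and a common tail `z`
with `x = δz`, `x' = δ'z`, `αδ = α'δ'`, and moreover `αδ ∈ α ∨ α'`. -/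
theorem statement9 {Λ : Type u} (C : CategoryOfPaths Λ) (hfa : FinitelyAligned C)
    (α α' : Λ) (x x' : Set Λ)
    (hx : x ∈ lamStar C (C.s α)) (hx' : x' ∈ lamStar C (C.s α'))
    (h : pMulStar C α x = pMulStar C α' x') :
    ∃ (δ δ' : Λ) (z : Set Λ),
      C.s α = C.r δ ∧ C.s α' = C.r δ' ∧ z ∈ lamStar C (C.s δ) ∧
      x = pMulStar C δ z ∧ x' = pMulStar C δ' z ∧
      C.comp α δ = C.comp α' δ' ∧ C.comp α δ ∈ pMinCE C α α' := by
  obtain ⟨γ, hγx, hγ, hα'γ⟩ : α' ∈ pMulStar C α x := h ▸ C.self_mem_pMulStar hx'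
  obtain ⟨μ, hμ, hμγ⟩ := C.exists_mem_pMinCE_of_mem_pTail hfa ⟨γ, hγ, rfl⟩ hα'γ
  obtain ⟨⟨δ, hδ, rfl⟩, δ', hδ', hδδ'⟩ := ((C.mem_pMinCE_iff).1 hμ).1
  obtain ⟨-, -, hxdir, hxher⟩ := hx
  obtain ⟨-, -, hxdir', hxher'⟩ := hx'
  have hμx : C.comp α δ ∈ pMulStar C α x := ⟨γ, hγx, hγ, hμγ⟩
  have hδx : δ ∈ x := C.mem_of_comp_mem_pMulStar hxher hδ hμx
  have hδx' : δ' ∈ x' := C.mem_of_comp_mem_pMulStar hxher' hδ' (hδδ' ▸ h ▸ hμx)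
  have hz : pShift C δ x = pShift C δ' x' := by
    rw [← C.pShift_comp_pMulStar hxher hδ, ← C.pShift_comp_pMulStar hxher' hδ', h, hδδ']
  refine ⟨δ, δ', pShift C δ x, hδ, hδ', C.pShift_mem_lamStar hxdir hxher hδx,
    C.eq_pMulStar_pShift hxdir hxher hδx, ?_, hδδ', hμ⟩
  rw [hz]
  exact C.eq_pMulStar_pShift hxdir' hxher' hδx'
end

section
/- Let Λ be a finitely aligned category of paths. On the set of triples {(α, β, x) : α, β ∈ Λ, s(α) = s(β), x ∈ s(α)Λ*}, define (α, β, x) ~ (α', β', x') if there exist z ∈ Λ* and paths δ, δ' with source equal to the vertex of z such that x = δz, x' = δ'z, αδ = α'δ', and βδ = β'δ'. Then ~ is an equivalence relation. -/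
universe u v

variable {Λ : Type u}

section Aux

variable {Λ' : Type u}

lemma mem_pTail_self (C : CategoryOfPaths Λ') (α : Λ') : α ∈ pTail C α :=
  ⟨C.s α, (C.r_s α).symm, (C.comp_id α).symm⟩

lemma comp_mem_pTail (C : CategoryOfPaths Λ') {α β : Λ'} (h : C.s α = C.r β) :
    C.comp α β ∈ pTail C α := ⟨β, h, rfl⟩

lemma pTail_trans (C : CategoryOfPaths Λ') {α γ δ : Λ'}
    (h1 : γ ∈ pTail C α) (h2 : δ ∈ pTail C γ) : δ ∈ pTail C α := by
  obtain ⟨β, hβ, rfl⟩ := h1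
  obtain ⟨β', hβ', rfl⟩ := h2
  have hsβ : C.s β = C.r β' := by rw [← C.s_comp hβ]; exact hβ'
  exact ⟨C.comp β β', by rw [C.r_comp hsβ]; exact hβ, C.comp_assoc hβ hsβ⟩

lemma mulStar_vertex (C : CategoryOfPaths Λ') {v : Λ'} {x : Set Λ'}
    (hv : C.r v = v) (hx : x ∈ lamStar C v) : pMulStar C v x = x := by
  ext δ; constructor
  · rintro ⟨γ, hγ, hs, hδ⟩
    have hrγ : C.r γ = v := hx.2.1 hγ
    have hcomp : C.comp v γ = γ := by rw [← hrγ]; exact C.id_comp γ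
    exact hx.2.2.2 γ hγ δ (hcomp ▸ hδ)
  · intro hδ
    have hrδ : C.r δ = v := hx.2.1 hδ
    have hsv : C.s v = v := by rw [← hv, C.s_r]
    refine ⟨δ, hδ, by rw [hsv, hrδ], ?_⟩
    have hcomp : C.comp v δ = δ := by rw [← hrδ]; exact C.id_comp δ
    rw [hcomp]; exact mem_pTail_self C δ

lemma shift_eq (C : CategoryOfPaths Λ') {δ : Λ'} {z : Set Λ'}
    (hz : z ∈ lamStar C (C.s δ)) : pShift C δ (pMulStar C δ z) = z := by
  ext ξ; constructor
  · rintro ⟨hr, γ, hγ, hs, ρ, hρ, heq⟩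
    have hsξ : C.s ξ = C.r ρ := by rw [← C.s_comp hr]; exact hρ
    have h2 : C.comp δ γ = C.comp δ (C.comp ξ ρ) := by
      rw [heq, C.comp_assoc hr hsξ]
    have hγeq : γ = C.comp ξ ρ :=
      C.left_cancel hs (by rw [C.r_comp hsξ]; exact hr) h2
    exact hz.2.2.2 γ hγ ξ ⟨ρ, hsξ, hγeq⟩
  · intro hξ
    have hrξ : C.r ξ = C.s δ := hz.2.1 hξ
    exact ⟨hrξ.symm, ξ, hξ, hrξ.symm, mem_pTail_self C (C.comp δ ξ)⟩

lemma mulStar_shift (C : CategoryOfPaths Λ') {v μ : Λ'} {x : Set Λ'}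
    (hx : x ∈ lamStar C v) (hμ : μ ∈ x) : pMulStar C μ (pShift C μ x) = x := by
  ext δ; constructor
  · rintro ⟨γ, ⟨hs, hmem⟩, hs2, hδ⟩
    exact hx.2.2.2 _ hmem δ hδ
  · intro hδ
    obtain ⟨τ, ⟨hτδ, hτμ⟩, hτx⟩ := hx.2.2.1 δ hδ μ hμ
    obtain ⟨γ, hsγ, rfl⟩ := hτμ
    exact ⟨γ, ⟨hsγ, hτx⟩, hsγ, hτδ⟩

lemma shift_lamStar (C : CategoryOfPaths Λ') {v μ : Λ'} {x : Set Λ'}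
    (hx : x ∈ lamStar C v) (hμ : μ ∈ x) : pShift C μ x ∈ lamStar C (C.s μ) := by
  refine ⟨⟨C.s μ, (C.r_s μ).symm, ?_⟩, ?_, ?_, ?_⟩
  · rw [C.comp_id]; exact hμ
  · intro ξ hξ; exact hξ.1.symm
  · rintro ξ₁ ⟨h1, h1x⟩ ξ₂ ⟨h2, h2x⟩
    obtain ⟨τ, ⟨hτ1, hτ2⟩, hτx⟩ := hx.2.2.1 _ h1x _ h2x
    obtain ⟨ρ₁, hρ₁, rfl⟩ := hτ1
    obtain ⟨ρ₂, hρ₂, heq⟩ := hτ2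
    have hs1 : C.s ξ₁ = C.r ρ₁ := by rw [← C.s_comp h1]; exact hρ₁
    have hs2 : C.s ξ₂ = C.r ρ₂ := by rw [← C.s_comp h2]; exact hρ₂
    have key : C.comp ξ₁ ρ₁ = C.comp ξ₂ ρ₂ := by
      refine C.left_cancel (α := μ) (by rw [C.r_comp hs1]; exact h1)
        (by rw [C.r_comp hs2]; exact h2) ?_
      rw [← C.comp_assoc h1 hs1, ← C.comp_assoc h2 hs2]; exact heq
    refine ⟨C.comp ξ₁ ρ₁, ⟨⟨ρ₁, hs1, rfl⟩, ⟨ρ₂, hs2, key⟩⟩, ?_, ?_⟩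
    · rw [C.r_comp hs1]; exact h1
    · rw [← C.comp_assoc h1 hs1]; exact hτx
  · rintro γ ⟨hsγ, hγx⟩ ξ ⟨ρ, hρ, rfl⟩
    have hrξ : C.s μ = C.r ξ := by rw [C.r_comp hρ] at hsγ; exact hsγ
    refine ⟨hrξ, ?_⟩
    exact hx.2.2.2 _ hγx (C.comp μ ξ)
      ⟨ρ, by rw [C.s_comp hrξ]; exact hρ, (C.comp_assoc hrξ hρ).symm⟩

lemma shift_shift (C : CategoryOfPaths Λ') {δ μ : Λ'} (h : C.s δ = C.r μ)
    (x : Set Λ') : pShift C (C.comp δ μ) x = pShift C μ (pShift C δ x) := by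
  ext ξ; constructor
  · rintro ⟨h1, h2⟩
    have hsμ : C.s μ = C.r ξ := by rw [← C.s_comp h]; exact h1
    exact ⟨hsμ, by rw [C.r_comp hsμ]; exact h,
      by rw [← C.comp_assoc h hsμ]; exact h2⟩
  · rintro ⟨h1, h2, h3⟩
    exact ⟨by rw [C.s_comp h]; exact h1, by rw [C.comp_assoc h h1]; exact h3⟩

lemma mulStar_assoc (C : CategoryOfPaths Λ') {δ μ : Λ'} (h : C.s δ = C.r μ)
    (y : Set Λ') :
    pMulStar C (C.comp δ μ) y = pMulStar C δ (pMulStar C μ y) := by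
  ext δ₀; constructor
  · rintro ⟨ξ, hξ, hs, ht⟩
    have hsμ : C.s μ = C.r ξ := by rw [← C.s_comp h]; exact hs
    refine ⟨C.comp μ ξ, ⟨ξ, hξ, hsμ, mem_pTail_self C _⟩,
      by rw [C.r_comp hsμ]; exact h, ?_⟩
    rw [← C.comp_assoc h hsμ]; exact ht
  · rintro ⟨γ, ⟨ξ, hξ, hsμξ, ρ, hρ, heq⟩, hsγ, ht⟩
    refine ⟨ξ, hξ, by rw [C.s_comp h]; exact hsμξ, ?_⟩
    have hcalc : C.comp (C.comp δ μ) ξ = C.comp (C.comp δ γ) ρ := by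
      rw [C.comp_assoc h hsμξ, heq, ← C.comp_assoc hsγ hρ]
    rw [hcalc]
    exact pTail_trans C ht ⟨ρ, by rw [C.s_comp hsγ]; exact hρ, rfl⟩

lemma self_mem_mulStar (C : CategoryOfPaths Λ') {δ : Λ'} {z : Set Λ'}
    (hz : z ∈ lamStar C (C.s δ)) : δ ∈ pMulStar C δ z := by
  obtain ⟨γ, hγ⟩ := hz.1
  exact ⟨γ, hγ, (hz.2.1 hγ).symm, comp_mem_pTail C (hz.2.1 hγ).symm⟩

lemma init_mem (C : CategoryOfPaths Λ') {δ μ : Λ'} {z : Set Λ'}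
    (hz : z ∈ lamStar C (C.s δ)) (h : C.s δ = C.r μ)
    (hmem : C.comp δ μ ∈ pMulStar C δ z) : μ ∈ z := by
  have h2 : μ ∈ pShift C δ (pMulStar C δ z) := ⟨h, hmem⟩
  rwa [shift_eq C hz] at h2

lemma lamStar_vertex_eq (C : CategoryOfPaths Λ') {v v' : Λ'} {z : Set Λ'}
    (h1 : z ∈ lamStar C v) (h2 : z ∈ lamStar C v') : v = v' := by
  obtain ⟨γ, hγ⟩ := h1.1
  exact (h1.2.1 hγ).symm.trans (h2.2.1 hγ)

end Aux

/-- Lemma 6.3. The relation `(α, β, x) ~ (α', β', x')` given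
by the existence of `z, δ, δ'` with `x = δz`, `x' = δ'z`, `αδ = α'δ'`,
`βδ = β'δ'`, is an equivalence relation on the triples. -/
theorem statement10 {Λ : Type u} (C : CategoryOfPaths Λ)
    (hfa : FinitelyAligned C) :
    Equivalence (tripRel C) := by
  constructor
  · -- reflexivity
    intro t
    refine ⟨t.1.2.2, C.s t.1.1, C.s t.1.1, ?_, ?_, (C.r_s _).symm, (C.r_s _).symm,
      (mulStar_vertex C (C.r_s _) t.2.2).symm,
      (mulStar_vertex C (C.r_s _) t.2.2).symm, rfl, ?_⟩
    · rw [C.s_s]; exact t.2.2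
    · rw [C.s_s]; exact t.2.2
    · rw [t.2.1]
  · -- symmetry
    rintro t t' ⟨z, δ, δ', h1, h2, h3, h4, h5, h6, h7, h8⟩
    exact ⟨z, δ', δ, h2, h1, h4, h3, h6, h5, h7.symm, h8.symm⟩
  · -- transitivity
    rintro t t' t'' ⟨z, δ, δ', hz, hz', hδ, hδ', hx, hx', hαδ, hβδ⟩
      ⟨w, ε, ε', hw, hw', hε, hε', hx'2, hx'', hαε, hβε⟩
    have hδδ' : C.s δ = C.s δ' := lamStar_vertex_eq C hz hz'
    have hεε' : C.s ε = C.s ε' := lamStar_vertex_eq C hw hw'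
    have hx'mem := t'.2.2
    have hδ'x : δ' ∈ t'.1.2.2 := by rw [hx']; exact self_mem_mulStar C hz'
    have hεx : ε ∈ t'.1.2.2 := by rw [hx'2]; exact self_mem_mulStar C hw
    obtain ⟨η, ⟨hηδ', hηε⟩, hηx⟩ := hx'mem.2.2.1 _ hδ'x _ hεx
    obtain ⟨μ, hsδ'μ, hη1⟩ := hηδ'
    obtain ⟨ν, hsεν, hη2⟩ := hηε
    have hμz : μ ∈ z := init_mem C hz' hsδ'μ (by rw [← hη1, ← hx']; exact hηx)
    have hνw : ν ∈ w := init_mem C hw hsεν (by rw [← hη2, ← hx'2]; exact hηx)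
    have hyz : pMulStar C μ (pShift C μ z) = z := mulStar_shift C hz' hμz
    have hy_lam : pShift C μ z ∈ lamStar C (C.s μ) := shift_lamStar C hz' hμz
    have hzx' : z = pShift C δ' t'.1.2.2 := by rw [hx', shift_eq C hz']
    have hwx' : w = pShift C ε t'.1.2.2 := by rw [hx'2, shift_eq C hw]
    have hy_eq : pShift C μ z = pShift C ν w := by
      rw [hzx', hwx', ← shift_shift C hsδ'μ, ← shift_shift C hsεν, ← hη1, ← hη2]
    have hyw : pMulStar C ν (pShift C μ z) = w := by
      rw [hy_eq]; exact mulStar_shift C hw hνw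
    have hy_lam2 : pShift C μ z ∈ lamStar C (C.s ν) := by
      rw [hy_eq]; exact shift_lamStar C hw hνw
    have hsδμ : C.s δ = C.r μ := hδδ'.trans hsδ'μ
    have hsε'ν : C.s ε' = C.r ν := hεε'.symm.trans hsεν
    have hδβ : C.s t.1.2.1 = C.r δ := by rw [← t.2.1]; exact hδ
    have hδ'β : C.s t'.1.2.1 = C.r δ' := by rw [← t'.2.1]; exact hδ'
    have hεβ : C.s t'.1.2.1 = C.r ε := by rw [← t'.2.1]; exact hε
    have hε'β : C.s t''.1.2.1 = C.r ε' := by rw [← t''.2.1]; exact hε'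
    refine ⟨pShift C μ z, C.comp δ μ, C.comp ε' ν, ?_, ?_, ?_, ?_, ?_, ?_, ?_, ?_⟩
    · rw [C.s_comp hsδμ]; exact hy_lam
    · rw [C.s_comp hsε'ν]; exact hy_lam2
    · rw [C.r_comp hsδμ]; exact hδ
    · rw [C.r_comp hsε'ν]; exact hε'
    · rw [hx, mulStar_assoc C hsδμ, hyz]
    · rw [hx'', mulStar_assoc C hsε'ν, hyw]
    · rw [← C.comp_assoc hδ hsδμ, hαδ, C.comp_assoc hδ' hsδ'μ, ← hη1, hη2,
        ← C.comp_assoc hε hsεν, hαε, C.comp_assoc hε' hsε'ν]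
    · rw [← C.comp_assoc hδβ hsδμ, hβδ, C.comp_assoc hδ'β hsδ'μ, ← hη1, hη2,
        ← C.comp_assoc hεβ hsεν, hβε, C.comp_assoc hε'β hsε'ν]
end
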